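/- Let H, E ∈ ℝ^{n×K} with H of full rank K, set Ĥ = H + E, and assume ρ(EᵀE) ≤ (1/4)·ρ_min(HᵀH). For a unit vector u ∈ ℝⁿ define Λ_u = (HᵀH)⁻¹Hᵀu and the quantities I = ‖E·Λ_u‖², II = ‖(ĤᵀĤ − HᵀH)·Λ_u‖², III = ‖H(HᵀH)⁻¹Eᵀu‖². Then ‖P_{[H]}(u) − P_{[Ĥ]}(u)‖² ≤ 16·I + (16 + 32·Cond(HᵀH))·ρ_min(HᵀH)⁻¹·II + (5 + 64·Cond(HᵀH) + 128·Cond(HᵀH)³)·III. -/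

import Mathlib

/-!
Write `A = HᵀH`, `Ĥ = H + E`, `Â = ĤᵀĤ` and `Λ = A⁻¹Hᵀu`. Since `HΛ = ĤΛ - EΛ` and
`Ĥᵀu = AΛ + Eᵀu`, the projection error splits as `-EΛ + ĤÂ⁻¹(Â - A)Λ - ĤÂ⁻¹Eᵀu`.
The hypothesis on `E` gives `‖Ĥz‖ ≥ ‖Hz‖ - ‖Ez‖ ≥ √ρ_min(A) ‖z‖ / 2`, hence
`‖ĤÂ⁻¹x‖² ≤ 4 ρ_min(A)⁻¹ ‖x‖²`; and `‖Eᵀu‖² = ‖A(A⁻¹Eᵀu)‖² ≤ ρ(A) · III` because `A² ≤ ρ(A) A`.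
With `‖a + b + c‖² ≤ 3(‖a‖² + ‖b‖² + ‖c‖²)` the error is at most
`3 I + 12 ρ_min(A)⁻¹ II + 12 Cond(A) III`. When `ρ_min(A) ≤ 0` the hypothesis forces `E = 0`.
-/

open MeasureTheory ProbabilityTheory Matrix

/-- Orthogonal projection onto the column span of `M` (for `M` of full column rank). -/
noncomputable def projMat {n K : ℕ} (M : Matrix (Fin n) (Fin K) ℝ) :
    Matrix (Fin n) (Fin n) ℝ :=
  M * (Mᵀ * M)⁻¹ * Mᵀ

/-- Ridge-regularized projection operator with parameter `α`. -/
noncomputable def projMatReg {n K : ℕ} (M : Matrix (Fin n) (Fin K) ℝ) (α : ℝ) :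
    Matrix (Fin n) (Fin n) ℝ :=
  M * (Mᵀ * M + α • (1 : Matrix (Fin K) (Fin K) ℝ))⁻¹ * Mᵀ

/-- `ℓ²`-operator (spectral) norm of a square real matrix. -/
noncomputable def opNorm {n : ℕ} (M : Matrix (Fin n) (Fin n) ℝ) : ℝ :=
  ‖LinearMap.toContinuousLinearMap (Matrix.toEuclideanLin M)‖

/-- Largest real eigenvalue of a square matrix (`ρ`). -/
noncomputable def rhoMax {K : ℕ} (A : Matrix (Fin K) (Fin K) ℝ) : ℝ :=
  sSup (spectrum ℝ A)

/-- Smallest real eigenvalue of a square matrix (`ρ_min`). -/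
noncomputable def rhoMin {K : ℕ} (A : Matrix (Fin K) (Fin K) ℝ) : ℝ :=
  sInf (spectrum ℝ A)

/-- Condition number `Cond(A) = ρ(A)/ρ_min(A)`. -/
noncomputable def condNum {K : ℕ} (A : Matrix (Fin K) (Fin K) ℝ) : ℝ :=
  rhoMax A / rhoMin A

/-- For a symmetric matrix `M`, `ρ(M) = sup_{‖x‖ = 1} |xᵀ M x|`. -/
noncomputable def rhoAbs {K : ℕ} (M : Matrix (Fin K) (Fin K) ℝ) : ℝ :=
  sSup {r | ∃ x : Fin K → ℝ, x ⬝ᵥ x = 1 ∧ r = |x ⬝ᵥ (M *ᵥ x)|}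

/-- The family `Z i`, `i : ι`, consists of i.i.d. standard gaussian random variables. -/
def IsStdGaussianFamily {Ω : Type} [MeasureSpace Ω] {ι : Type} [Fintype ι]
    (Z : Ω → ι → ℝ) : Prop :=
  (∀ i, Measurable fun ω => Z ω i) ∧
  iIndepFun (fun i ω => Z ω i) ℙ ∧
  ∀ i, Measure.map (fun ω => Z ω i) ℙ = gaussianReal 0 1

open scoped MatrixOrder

section DotProduct

variable {ι R : Type*} [Fintype ι] [CommRing R] [LinearOrder R] [IsStrictOrderedRing R]

lemma dotProduct_self_nonneg (v : ι → R) : 0 ≤ v ⬝ᵥ v :=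
  Finset.sum_nonneg fun i _ => mul_self_nonneg (v i)

lemma sq_dotProduct_le (v w : ι → R) : (v ⬝ᵥ w) ^ 2 ≤ (v ⬝ᵥ v) * (w ⬝ᵥ w) := by
  simpa only [dotProduct, sq] using Finset.sum_mul_sq_le_sq_mul_sq Finset.univ v w

lemma dotProduct_self_add_add_le (a b c : ι → R) :
    (a + b + c) ⬝ᵥ (a + b + c) ≤ 3 * (a ⬝ᵥ a + b ⬝ᵥ b + c ⬝ᵥ c) := by
  have hab := dotProduct_self_nonneg (a - b)
  have hac := dotProduct_self_nonneg (a - c)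
  have hbc := dotProduct_self_nonneg (b - c)
  simp only [add_dotProduct, dotProduct_add, sub_dotProduct, dotProduct_sub,
    dotProduct_comm b a, dotProduct_comm c a, dotProduct_comm c b] at *
  linarith

/-- The squared form of `‖a + b‖ ≥ ‖a‖ - ‖b‖ ≥ 2√r - √r`. -/
lemma le_dotProduct_self_add {a b : ι → R} {r : R} (ha : 4 * r ≤ a ⬝ᵥ a) (hb : b ⬝ᵥ b ≤ r) :
    r ≤ (a + b) ⬝ᵥ (a + b) := by
  have hab := sq_dotProduct_le a b
  have hb0 := dotProduct_self_nonneg b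
  simp only [add_dotProduct, dotProduct_add, dotProduct_comm b a]
  nlinarith [sq_nonneg (a ⬝ᵥ a + 2 * a ⬝ᵥ b), mul_nonneg (sub_nonneg.2 ha) (sub_nonneg.2 hb),
    mul_nonneg (sub_nonneg.2 ha) hb0, mul_nonneg (hb0.trans hb) (sub_nonneg.2 hb)]

end DotProduct

lemma dotProduct_transpose_mul_self_mulVec {ι κ R : Type*} [Fintype ι] [Fintype κ] [CommSemiring R]
    (M : Matrix ι κ R) (z : κ → R) : z ⬝ᵥ ((Mᵀ * M) *ᵥ z) = (M *ᵥ z) ⬝ᵥ (M *ᵥ z) := by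
  rw [← mulVec_mulVec, dotProduct_transpose_mulVec, dotProduct_comm]

section Rayleigh

variable {K : ℕ} {A : Matrix (Fin K) (Fin K) ℝ}

lemma rhoMin_le_of_mem_spectrum {x : ℝ} (hx : x ∈ spectrum ℝ A) : rhoMin A ≤ x :=
  csInf_le A.finite_real_spectrum.bddBelow hx

lemma le_rhoMax_of_mem_spectrum {x : ℝ} (hx : x ∈ spectrum ℝ A) : x ≤ rhoMax A :=
  le_csSup A.finite_real_spectrum.bddAbove hx

lemma rhoMin_le_rhoMax (A : Matrix (Fin K) (Fin K) ℝ) : rhoMin A ≤ rhoMax A := by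
  rcases (spectrum ℝ A).eq_empty_or_nonempty with h | h
  · simp [rhoMin, rhoMax, h]
  · exact csInf_le_csSup h A.finite_real_spectrum.bddBelow A.finite_real_spectrum.bddAbove

lemma Matrix.IsHermitian.rhoMin_mul_dotProduct_self_le (hA : A.IsHermitian) (x : Fin K → ℝ) :
    rhoMin A * (x ⬝ᵥ x) ≤ x ⬝ᵥ (A *ᵥ x) := by
  have h : (A - algebraMap ℝ _ (rhoMin A)).PosSemidef :=
    algebraMap_le_of_le_spectrum (fun _ => rhoMin_le_of_mem_spectrum) hA.isSelfAdjoint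
  simpa [sub_mulVec, Algebra.algebraMap_eq_smul_one, smul_mulVec] using h.dotProduct_mulVec_nonneg x

lemma Matrix.IsHermitian.dotProduct_mulVec_le_rhoMax_mul (hA : A.IsHermitian) (x : Fin K → ℝ) :
    x ⬝ᵥ (A *ᵥ x) ≤ rhoMax A * (x ⬝ᵥ x) := by
  have h : (algebraMap ℝ _ (rhoMax A) - A).PosSemidef :=
    le_algebraMap_of_spectrum_le (fun _ => le_rhoMax_of_mem_spectrum) hA.isSelfAdjoint
  simpa [sub_mulVec, Algebra.algebraMap_eq_smul_one, smul_mulVec] using h.dotProduct_mulVec_nonneg x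

lemma Matrix.PosSemidef.mulVec_dotProduct_self_le_rhoMax_mul (hA : A.PosSemidef)
    (x : Fin K → ℝ) : (A *ᵥ x) ⬝ᵥ (A *ᵥ x) ≤ rhoMax A * (x ⬝ᵥ (A *ᵥ x)) := by
  have h : A ^ 2 ≤ rhoMax A • A := by
    have := cfc_mono (a := A) (f := fun t => t ^ 2) (g := fun t => rhoMax A * t) fun t ht => by
      have h0 : 0 ≤ t := spectrum_nonneg_of_nonneg hA.nonneg ht
      nlinarith [le_rhoMax_of_mem_spectrum ht]
    rwa [cfc_pow_id A 2 hA.isHermitian.isSelfAdjoint,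
      cfc_const_mul_id _ A hA.isHermitian.isSelfAdjoint] at this
  have hx := (Matrix.le_iff.mp h).dotProduct_mulVec_nonneg x
  have hT : Aᵀ = A := by simpa only [conjTranspose_eq_transpose_of_trivial] using hA.isHermitian.eq
  rw [← dotProduct_transpose_mulVec, hT]
  simpa [sub_mulVec, smul_mulVec, sq, ← mulVec_mulVec] using hx

end Rayleigh

section Gram

variable {ι κ : Type*} [Fintype ι] [Fintype κ] {M : Matrix ι κ ℝ} {c : ℝ}

lemma posDef_transpose_mul_self_of_le (hc : 0 < c)
    (hM : ∀ z, c * (z ⬝ᵥ z) ≤ (M *ᵥ z) ⬝ᵥ (M *ᵥ z)) : (Mᵀ * M).PosDef := by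
  rw [← conjTranspose_eq_transpose_of_trivial]
  refine PosDef.conjTranspose_mul_self M fun x y hxy => ?_
  have h := hM (x - y)
  rw [mulVec_sub, hxy, sub_self, zero_dotProduct] at h
  have h0 : (x - y) ⬝ᵥ (x - y) = 0 :=
    le_antisymm (nonpos_of_mul_nonpos_right h hc) (dotProduct_self_nonneg _)
  exact sub_eq_zero.mp (dotProduct_self_eq_zero.mp h0)

lemma dotProduct_self_mulVec_inv_gram_le [DecidableEq κ] (hc : 0 < c)
    (hM : ∀ z, c * (z ⬝ᵥ z) ≤ (M *ᵥ z) ⬝ᵥ (M *ᵥ z)) (x : κ → ℝ) :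
    (M *ᵥ ((Mᵀ * M)⁻¹ *ᵥ x)) ⬝ᵥ (M *ᵥ ((Mᵀ * M)⁻¹ *ᵥ x)) ≤ c⁻¹ * (x ⬝ᵥ x) := by
  set y := (Mᵀ * M)⁻¹ *ᵥ x
  have hy : (Mᵀ * M) *ᵥ y = x := by
    rw [mulVec_mulVec, mul_nonsing_inv _ ((isUnit_iff_isUnit_det _).mp
      (posDef_transpose_mul_self_of_le hc hM).isUnit), one_mulVec]
  have hMy : (M *ᵥ y) ⬝ᵥ (M *ᵥ y) = y ⬝ᵥ x := by
    rw [← dotProduct_transpose_mul_self_mulVec, hy]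
  have hlow : c * (y ⬝ᵥ y) ≤ y ⬝ᵥ x := hMy ▸ hM y
  have hyx : 0 ≤ y ⬝ᵥ x := (mul_nonneg hc.le (dotProduct_self_nonneg y)).trans hlow
  have hCS : c * (y ⬝ᵥ x) * (y ⬝ᵥ x) ≤ (x ⬝ᵥ x) * (y ⬝ᵥ x) := by
    nlinarith [sq_dotProduct_le y x, dotProduct_self_nonneg x]
  rw [hMy, le_inv_mul_iff₀ hc]
  rcases hyx.eq_or_lt with h | h
  · simpa [← h] using dotProduct_self_nonneg x
  · exact le_of_mul_le_mul_right hCS h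

end Gram

section GramSpectrum

variable {ι : Type*} [Fintype ι] {K : ℕ}

lemma posSemidef_transpose_mul_self (M : Matrix ι (Fin K) ℝ) : (Mᵀ * M).PosSemidef := by
  simpa only [conjTranspose_eq_transpose_of_trivial] using posSemidef_conjTranspose_mul_self M

lemma rhoMin_mul_dotProduct_self_le_mulVec (M : Matrix ι (Fin K) ℝ) (z : Fin K → ℝ) :
    rhoMin (Mᵀ * M) * (z ⬝ᵥ z) ≤ (M *ᵥ z) ⬝ᵥ (M *ᵥ z) :=
  dotProduct_transpose_mul_self_mulVec M z ▸
    (posSemidef_transpose_mul_self M).isHermitian.rhoMin_mul_dotProduct_self_le z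

lemma mulVec_dotProduct_self_le_rhoMax_mul (M : Matrix ι (Fin K) ℝ) (z : Fin K → ℝ) :
    (M *ᵥ z) ⬝ᵥ (M *ᵥ z) ≤ rhoMax (Mᵀ * M) * (z ⬝ᵥ z) :=
  dotProduct_transpose_mul_self_mulVec M z ▸
    (posSemidef_transpose_mul_self M).isHermitian.dotProduct_mulVec_le_rhoMax_mul z

lemma eq_zero_of_rhoMax_transpose_mul_self_nonpos {M : Matrix ι (Fin K) ℝ}
    (hM : rhoMax (Mᵀ * M) ≤ 0) : M = 0 := by
  refine mulVec_injective (funext fun z => ?_)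
  have h := (mulVec_dotProduct_self_le_rhoMax_mul M z).trans
    (mul_nonpos_of_nonpos_of_nonneg hM (dotProduct_self_nonneg z))
  rw [zero_mulVec]
  exact dotProduct_self_eq_zero.mp (le_antisymm h (dotProduct_self_nonneg _))

lemma rhoMin_div_four_mul_le_add_mulVec {H E : Matrix ι (Fin K) ℝ}
    (hE : rhoMax (Eᵀ * E) ≤ 1 / 4 * rhoMin (Hᵀ * H)) (z : Fin K → ℝ) :
    rhoMin (Hᵀ * H) / 4 * (z ⬝ᵥ z) ≤ ((H + E) *ᵥ z) ⬝ᵥ ((H + E) *ᵥ z) := by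
  rw [add_mulVec]
  refine le_dotProduct_self_add ?_ ?_
  · linarith [rhoMin_mul_dotProduct_self_le_mulVec H z]
  · have hz := dotProduct_self_nonneg z
    exact (mulVec_dotProduct_self_le_rhoMax_mul E z).trans (by gcongr; linarith)

lemma dotProduct_self_le_rhoMax_mul_mulVec_inv_gram (H : Matrix ι (Fin K) ℝ)
    (hH : IsUnit (Hᵀ * H).det) (w : Fin K → ℝ) :
    w ⬝ᵥ w ≤ rhoMax (Hᵀ * H) *
      ((H *ᵥ ((Hᵀ * H)⁻¹ *ᵥ w)) ⬝ᵥ (H *ᵥ ((Hᵀ * H)⁻¹ *ᵥ w))) := by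
  have hw : (Hᵀ * H) *ᵥ ((Hᵀ * H)⁻¹ *ᵥ w) = w := by
    rw [mulVec_mulVec, mul_nonsing_inv _ hH, one_mulVec]
  have h := (posSemidef_transpose_mul_self H).mulVec_dotProduct_self_le_rhoMax_mul
    ((Hᵀ * H)⁻¹ *ᵥ w)
  rw [← dotProduct_transpose_mul_self_mulVec, hw]
  rwa [hw] at h

end GramSpectrum

lemma projMat_mulVec_sub_projMat_add_mulVec {n K : ℕ} (H E : Matrix (Fin n) (Fin K) ℝ)
    (hH : IsUnit (Hᵀ * H).det) (hHE : IsUnit ((H + E)ᵀ * (H + E)).det) (u : Fin n → ℝ) :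
    projMat H *ᵥ u - projMat (H + E) *ᵥ u =
      -(E *ᵥ ((Hᵀ * H)⁻¹ *ᵥ (Hᵀ *ᵥ u))) +
        (H + E) *ᵥ (((H + E)ᵀ * (H + E))⁻¹ *ᵥ
          (((H + E)ᵀ * (H + E) - Hᵀ * H) *ᵥ ((Hᵀ * H)⁻¹ *ᵥ (Hᵀ *ᵥ u)))) +
        -((H + E) *ᵥ (((H + E)ᵀ * (H + E))⁻¹ *ᵥ (Eᵀ *ᵥ u))) := by
  set Λ := (Hᵀ * H)⁻¹ *ᵥ (Hᵀ *ᵥ u)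
  set G := (H + E)ᵀ * (H + E)
  have hΛ : (Hᵀ * H) *ᵥ Λ = Hᵀ *ᵥ u := by
    rw [mulVec_mulVec, mul_nonsing_inv _ hH, one_mulVec]
  have hP : projMat H *ᵥ u = H *ᵥ Λ := by
    simp only [projMat, ← mulVec_mulVec, Λ]
  have hPE : projMat (H + E) *ᵥ u = (H + E) *ᵥ (G⁻¹ *ᵥ ((Hᵀ * H) *ᵥ Λ + Eᵀ *ᵥ u)) := by
    rw [hΛ, ← add_mulVec, ← transpose_add]
    simp only [projMat, ← mulVec_mulVec, G]
  have hGΛ : G⁻¹ *ᵥ ((G - Hᵀ * H) *ᵥ Λ) = Λ - G⁻¹ *ᵥ ((Hᵀ * H) *ᵥ Λ) := by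
    rw [sub_mulVec, mulVec_sub, mulVec_mulVec _ G⁻¹, nonsing_inv_mul _ hHE, one_mulVec]
  rw [hP, hPE, hGΛ, mulVec_add, mulVec_add, mulVec_sub, add_mulVec H E Λ]
  abel

theorem projection_error_decomposition_general (n K : ℕ) (H E : Matrix (Fin n) (Fin K) ℝ)
    (hE : rhoMax (Eᵀ * E) ≤ (1/4 : ℝ) * rhoMin (Hᵀ * H))
    (u : Fin n → ℝ) :
    let Hhat := H + E
    let Λ := (Hᵀ * H)⁻¹ *ᵥ (Hᵀ *ᵥ u)
    let tI := (E *ᵥ Λ) ⬝ᵥ (E *ᵥ Λ)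
    let tII := ((Hhatᵀ * Hhat - Hᵀ * H) *ᵥ Λ) ⬝ᵥ ((Hhatᵀ * Hhat - Hᵀ * H) *ᵥ Λ)
    let w3 := H *ᵥ ((Hᵀ * H)⁻¹ *ᵥ (Eᵀ *ᵥ u))
    let tIII := w3 ⬝ᵥ w3
    let pd := projMat H *ᵥ u - projMat Hhat *ᵥ u
    pd ⬝ᵥ pd ≤ 16 * tI + (16 + 32 * condNum (Hᵀ * H)) * (rhoMin (Hᵀ * H))⁻¹ * tII +
      (5 + 64 * condNum (Hᵀ * H) + 128 * (condNum (Hᵀ * H))^3) * tIII := by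
  intro Hhat Λ tI tII w3 tIII pd
  set ρ := rhoMin (Hᵀ * H)
  set σ := rhoMax (Hᵀ * H)
  rcases le_or_gt ρ 0 with hρ | hρ
  · obtain rfl : E = 0 := eq_zero_of_rhoMax_transpose_mul_self_nonpos (hE.trans (by linarith))
    simp [pd, tI, tII, tIII, w3, Hhat]
  have hHhat := rhoMin_div_four_mul_le_add_mulVec hE
  have hH : IsUnit (Hᵀ * H).det := (isUnit_iff_isUnit_det _).mp
    (posDef_transpose_mul_self_of_le hρ (rhoMin_mul_dotProduct_self_le_mulVec H)).isUnit
  have hHE : IsUnit (Hhatᵀ * Hhat).det := (isUnit_iff_isUnit_det _).mp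
    (posDef_transpose_mul_self_of_le (by positivity) hHhat).isUnit
  have hII := dotProduct_self_mulVec_inv_gram_le (by positivity) hHhat
    ((Hhatᵀ * Hhat - Hᵀ * H) *ᵥ Λ)
  have hIII := (dotProduct_self_mulVec_inv_gram_le (by positivity) hHhat (Eᵀ *ᵥ u)).trans
    (mul_le_mul_of_nonneg_left (dotProduct_self_le_rhoMax_mul_mulVec_inv_gram H hH (Eᵀ *ᵥ u))
      (by positivity))
  have hpd : pd = _ := projMat_mulVec_sub_projMat_add_mulVec H E hH hHE u
  have hσ : 0 ≤ σ / ρ := div_nonneg (hρ.le.trans (rhoMin_le_rhoMax _)) hρ.le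
  have htI : 0 ≤ tI := dotProduct_self_nonneg _
  have htII : 0 ≤ tII := dotProduct_self_nonneg _
  have htIII : 0 ≤ tIII := dotProduct_self_nonneg _
  calc pd ⬝ᵥ pd ≤ 3 * (tI + (ρ / 4)⁻¹ * tII + (ρ / 4)⁻¹ * (σ * tIII)) := by
        rw [hpd]
        refine (dotProduct_self_add_add_le _ _ _).trans ?_
        rw [neg_dotProduct, dotProduct_neg, neg_neg, neg_dotProduct, dotProduct_neg, neg_neg]
        gcongr
    _ = 3 * tI + 12 * ρ⁻¹ * tII + 12 * (σ / ρ) * tIII := by ring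
    _ ≤ 16 * tI + (16 + 32 * (σ / ρ)) * ρ⁻¹ * tII +
          (5 + 64 * (σ / ρ) + 128 * (σ / ρ) ^ 3) * tIII := by
        gcongr ?_ * tI + ?_ * ρ⁻¹ * tII + ?_ * tIII
        · norm_num
        · linarith
        · nlinarith [pow_nonneg hσ 3]

/-- Main decomposition of the projection error (Theorem `ProjOperatorSkeletonProof`
with explicit constants). -/
theorem projection_error_decomposition (n K : ℕ) (H E : Matrix (Fin n) (Fin K) ℝ)
    (hH : H.rank = K)
    (hE : rhoMax (Eᵀ * E) ≤ (1/4 : ℝ) * rhoMin (Hᵀ * H))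
    (u : Fin n → ℝ) (hu : u ⬝ᵥ u = 1) :
    let Hhat := H + E
    let Λ := (Hᵀ * H)⁻¹ *ᵥ (Hᵀ *ᵥ u)
    let tI := (E *ᵥ Λ) ⬝ᵥ (E *ᵥ Λ)
    let tII := ((Hhatᵀ * Hhat - Hᵀ * H) *ᵥ Λ) ⬝ᵥ ((Hhatᵀ * Hhat - Hᵀ * H) *ᵥ Λ)
    let w3 := H *ᵥ ((Hᵀ * H)⁻¹ *ᵥ (Eᵀ *ᵥ u))
    let tIII := w3 ⬝ᵥ w3
    let pd := projMat H *ᵥ u - projMat Hhat *ᵥ u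
    pd ⬝ᵥ pd ≤ 16 * tI + (16 + 32 * condNum (Hᵀ * H)) * (rhoMin (Hᵀ * H))⁻¹ * tII +
      (5 + 64 * condNum (Hᵀ * H) + 128 * (condNum (Hᵀ * H))^3) * tIII :=
  projection_error_decomposition_general n K H E hE u
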